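/- Let n ≥ 1, ρ > 0, f ∈ C[0,1], and let Φ_n ∈ Π_n be the polynomial with Φ_n(j/n) = F_{n,j}^ρ(f) for j = 0,…,n. Then [F_{n,0}^ρ,…,F_{n,n}^ρ; f] = ((nρ)^{\overline{n}}/(nρ)^n) · [0, 1/n, …, (n−1)/n, 1; Φ_n], where x^{\overline{n}} = x(x+1)⋯(x+n−1) is the rising factorial and [0,1/n,…,1; Φ_n] denotes the classical divided difference of Φ_n at the nodes 0, 1/n, …, 1. -/

import Mathlib

/-!
On polynomials the functionals are explicit: the Beta moments
`∫₀¹ t^(a-1) (1-t)^(b-1) t^m dt / B(a,b) = a^{(m)} / (a+b)^{(m)}` give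
`F_{n,k}^ρ(x^m) = (kρ)^{(m)} / (nρ)^{(m)}`, and this also holds for `k = 0` and `k = n`.
Hence `Φ(k/n) = F_{n,k}^ρ(f) = F_{n,k}^ρ(L)` is the value at `k/n` of the polynomial `Ψ` obtained
from `L` by replacing `x^m` with `(nρx)^{(m)} / (nρ)^{(m)}`. The divided difference at the nodes
`k/n` therefore only sees `Ψ`, and equals its `x^n`-coefficient `(nρ)^n / (nρ)^{(n)} · L_n`.
-/

open MeasureTheory

/-- Euler Beta function `B(a,b) = ∫₀¹ t^(a-1) (1-t)^(b-1) dt`. -/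
noncomputable def betaFn (a b : ℝ) : ℝ :=
  ∫ t in (0:ℝ)..1, t ^ (a - 1) * (1 - t) ^ (b - 1)

/-- The functionals `F_{n,k}^ρ`. -/
noncomputable def Ffun (n k : ℕ) (ρ : ℝ) (f : ℝ → ℝ) : ℝ :=
  if k = 0 then f 0
  else if k = n then f 1
  else (betaFn ((k : ℝ) * ρ) (((n : ℝ) - (k : ℝ)) * ρ))⁻¹ *
    ∫ t in (0:ℝ)..1, t ^ ((k : ℝ) * ρ - 1) * (1 - t) ^ (((n : ℝ) - (k : ℝ)) * ρ - 1) * f t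

/-- Bernstein basis polynomial `p_{n,k}(x)`. -/
noncomputable def bern (n k : ℕ) (x : ℝ) : ℝ :=
  (n.choose k : ℝ) * x ^ k * (1 - x) ^ (n - k)

/-- The operator `U_n^ρ`. -/
noncomputable def Uop (n : ℕ) (ρ : ℝ) (f : ℝ → ℝ) (x : ℝ) : ℝ :=
  ∑ k ∈ Finset.range (n + 1), Ffun n k ρ f * bern n k x

open Polynomial Set

lemma ofReal_betaIntegrand {a b t : ℝ} (h0 : 0 ≤ t) (h1 : t ≤ 1) :
    ((t ^ (a - 1) * (1 - t) ^ (b - 1) : ℝ) : ℂ) =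
      (t : ℂ) ^ ((a : ℂ) - 1) * (1 - (t : ℂ)) ^ ((b : ℂ) - 1) := by
  push_cast [Complex.ofReal_cpow h0, Complex.ofReal_cpow (sub_nonneg.2 h1)]
  rfl

lemma ofReal_betaFn (a b : ℝ) : (betaFn a b : ℂ) = Complex.betaIntegral a b := by
  rw [betaFn, ← intervalIntegral.integral_ofReal, Complex.betaIntegral]
  exact intervalIntegral.integral_congr_Ioo_of_le zero_le_one fun t ht ↦
    ofReal_betaIntegrand ht.1.le ht.2.le

lemma betaFn_eq_beta {a b : ℝ} (ha : 0 < a) (hb : 0 < b) :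
    betaFn a b = ProbabilityTheory.beta a b := by
  rw [ProbabilityTheory.beta_eq_betaIntegralReal a b ha hb, ← ofReal_betaFn, Complex.ofReal_re]

lemma betaFn_pos {a b : ℝ} (ha : 0 < a) (hb : 0 < b) : 0 < betaFn a b :=
  betaFn_eq_beta ha hb ▸ ProbabilityTheory.beta_pos ha hb

lemma intervalIntegrable_betaIntegrand {a b : ℝ} (ha : 0 < a) (hb : 0 < b) :
    IntervalIntegrable (fun t : ℝ ↦ t ^ (a - 1) * (1 - t) ^ (b - 1)) volume 0 1 := by
  have h := Complex.betaIntegral_convergent (u := a) (v := b) (by simpa) (by simpa)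
  rw [intervalIntegrable_iff] at h
  refine (intervalIntegrable_congr_uIoo fun t ht ↦ ?_).2 (intervalIntegrable_iff.2 h.re)
  rw [uIoo_of_le zero_le_one] at ht
  simp only [← ofReal_betaIntegrand ht.1.le ht.2.le, RCLike.re_to_complex, Complex.ofReal_re]

lemma Real.Gamma_add_nat {a : ℝ} (ha : 0 < a) (m : ℕ) :
    Real.Gamma (a + m) = (ascPochhammer ℝ m).eval a * Real.Gamma a := by
  induction m with
  | zero => simp
  | succ m ih =>
    rw [Nat.cast_succ, ← add_assoc, Real.Gamma_add_one (by positivity), ih,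
      ascPochhammer_succ_eval]
    ring

lemma betaFn_add_nat {a b : ℝ} (ha : 0 < a) (hb : 0 < b) (m : ℕ) :
    betaFn (a + m) b =
      (ascPochhammer ℝ m).eval a / (ascPochhammer ℝ m).eval (a + b) * betaFn a b := by
  have hab : 0 < a + b := add_pos ha hb
  rw [betaFn_eq_beta (by positivity) hb, betaFn_eq_beta ha hb, ProbabilityTheory.beta,
    ProbabilityTheory.beta, add_right_comm, Real.Gamma_add_nat ha, Real.Gamma_add_nat hab]
  have := (ascPochhammer_pos m _ hab).ne'
  have := (Real.Gamma_pos_of_pos hab).ne'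
  field_simp

lemma betaIntegrand_mul_pow {a b t : ℝ} (ht : 0 < t) (m : ℕ) :
    t ^ (a - 1) * (1 - t) ^ (b - 1) * t ^ m = t ^ (a + m - 1) * (1 - t) ^ (b - 1) := by
  rw [add_sub_right_comm, Real.rpow_add_natCast ht.ne']
  ring

lemma intervalIntegrable_betaIntegrand_mul_pow {a b : ℝ} (ha : 0 < a) (hb : 0 < b) (m : ℕ) :
    IntervalIntegrable (fun t : ℝ ↦ t ^ (a - 1) * (1 - t) ^ (b - 1) * t ^ m) volume 0 1 := by
  refine (intervalIntegrable_congr_uIoo fun t ht ↦ ?_).2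
    (intervalIntegrable_betaIntegrand (a := a + m) (by positivity) hb)
  rw [uIoo_of_le zero_le_one] at ht
  exact betaIntegrand_mul_pow ht.1 m

lemma integral_betaIntegrand_mul_pow (a b : ℝ) (m : ℕ) :
    ∫ t in (0 : ℝ)..1, t ^ (a - 1) * (1 - t) ^ (b - 1) * t ^ m = betaFn (a + m) b :=
  intervalIntegral.integral_congr_Ioo_of_le zero_le_one fun _ ht ↦ betaIntegrand_mul_pow ht.1 m

lemma betaFn_inv_mul_integral_mul_eval {a b : ℝ} (ha : 0 < a) (hb : 0 < b) {P : ℝ[X]} {N : ℕ}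
    (hP : P.natDegree < N) :
    (betaFn a b)⁻¹ * ∫ t in (0 : ℝ)..1, t ^ (a - 1) * (1 - t) ^ (b - 1) * P.eval t =
      ∑ m ∈ Finset.range N,
        P.coeff m * ((ascPochhammer ℝ m).eval a / (ascPochhammer ℝ m).eval (a + b)) := by
  have hmoments : ∫ t in (0 : ℝ)..1, t ^ (a - 1) * (1 - t) ^ (b - 1) * P.eval t =
      ∑ m ∈ Finset.range N, P.coeff m * betaFn (a + m) b := by
    simp_rw [eval_eq_sum_range' hP, Finset.mul_sum, mul_left_comm _ (P.coeff _)]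
    rw [intervalIntegral.integral_finsetSum fun m _ ↦
      (intervalIntegrable_betaIntegrand_mul_pow ha hb m).const_mul _]
    simp_rw [intervalIntegral.integral_const_mul, integral_betaIntegrand_mul_pow]
  have hB := (betaFn_pos ha hb).ne'
  rw [hmoments, Finset.mul_sum]
  refine Finset.sum_congr rfl fun m _ ↦ ?_
  rw [betaFn_add_nat ha hb]
  field_simp

lemma Ffun_eval_polynomial {n k : ℕ} (hk : k ≤ n) {ρ : ℝ} (hρ : 0 < ρ) {P : ℝ[X]} {N : ℕ}
    (hP : P.natDegree < N) :
    Ffun n k ρ (fun x ↦ P.eval x) = ∑ m ∈ Finset.range N,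
      P.coeff m * ((ascPochhammer ℝ m).eval (k * ρ) / (ascPochhammer ℝ m).eval (n * ρ)) := by
  rcases Nat.eq_zero_or_pos k with rfl | hk0
  · simp [Ffun, ascPochhammer_eval_zero, ite_div, mul_ite, Finset.sum_ite_eq',
      (Nat.zero_le _).trans_lt hP, coeff_zero_eq_eval_zero]
  rcases hk.eq_or_lt with rfl | hkn
  · have hpos (m : ℕ) := (ascPochhammer_pos m (k * ρ) (by positivity)).ne'
    simp [Ffun, hk0.ne', hpos, eval_eq_sum_range' hP]
  have hnk : (0 : ℝ) < n - k := sub_pos.2 (by exact_mod_cast hkn)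
  simp only [Ffun, if_neg hk0.ne', if_neg hkn.ne]
  rw [betaFn_inv_mul_integral_mul_eval (by positivity) (by positivity) hP]
  simp only [← add_mul, add_sub_cancel]

lemma coeff_eq_sum_div_prod_range {F : Type*} [Field F] {v : ℕ → F} {n : ℕ}
    (hv : InjOn v (Finset.range (n + 1))) {P : F[X]} (hP : P.natDegree ≤ n) :
    P.coeff n = ∑ i ∈ Finset.range (n + 1),
      P.eval (v i) / ∏ j ∈ (Finset.range (n + 1)).erase i, (v i - v j) := by
  have hdeg : P.degree < (Finset.range (n + 1)).card := by
    rw [Finset.card_range]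
    exact degree_le_natDegree.trans_lt (by exact_mod_cast Nat.lt_succ_of_le hP)
  simpa using Lagrange.coeff_eq_sum hv hdeg

section ascPochhammerTransform

variable {K : Type*} [Field K]

/-- For `s = nρ`, `F_{n,k}^ρ(P)` is the value of this polynomial at `k / n`. -/
noncomputable def ascPochhammerTransform (s : K) (P : K[X]) : K[X] :=
  (P.sum fun m c ↦ C (c / (ascPochhammer K m).eval s) * ascPochhammer K m).comp (C s * X)

lemma eval_ascPochhammerTransform (s : K) {P : K[X]} {N : ℕ} (hP : P.natDegree < N) (x : K) :
    (ascPochhammerTransform s P).eval x = ∑ m ∈ Finset.range N,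
      P.coeff m * ((ascPochhammer K m).eval (s * x) / (ascPochhammer K m).eval s) := by
  rw [ascPochhammerTransform, eval_comp, sum_over_range' _ (by simp) N hP, eval_finsetSum]
  refine Finset.sum_congr rfl fun m _ ↦ ?_
  simp only [eval_mul, eval_C, eval_X]
  ring

lemma coeff_ascPochhammerTransform {s : K} {P : K[X]} {n : ℕ} (hP : P.natDegree ≤ n) :
    (ascPochhammerTransform s P).coeff n = P.coeff n * s ^ n / (ascPochhammer K n).eval s := by
  have hlower : ∀ m ∈ Finset.range n, (ascPochhammer K m).coeff n = 0 := fun m hm ↦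
    coeff_eq_zero_of_natDegree_lt
      ((ascPochhammer_natDegree K m).trans_lt (Finset.mem_range.1 hm))
  have hlead : (ascPochhammer K n).coeff n = 1 := by
    simpa [ascPochhammer_natDegree] using (monic_ascPochhammer K n).coeff_natDegree
  rw [ascPochhammerTransform, comp_C_mul_X_coeff, sum_over_range' _ (by simp) (n + 1)
    (Nat.lt_succ_of_le hP), finsetSum_coeff, Finset.sum_range_succ,
    Finset.sum_eq_zero fun m hm ↦ by rw [coeff_C_mul, hlower m hm, mul_zero], zero_add,
    coeff_C_mul, hlead]
  ring

lemma natDegree_ascPochhammerTransform_le (s : K) (P : K[X]) :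
    (ascPochhammerTransform s P).natDegree ≤ P.natDegree :=
  natDegree_le_iff_coeff_eq_zero.2 fun _ hN ↦ by
    rw [coeff_ascPochhammerTransform hN.le, coeff_eq_zero_of_natDegree_lt hN, zero_mul, zero_div]

end ascPochhammerTransform

theorem coeff_L_eq_risingFactorial_mul_dividedDifference_general
    (n : ℕ) (hn : 1 ≤ n) (ρ : ℝ) (hρ : 0 < ρ)
    (f : ℝ → ℝ)
    (L : Polynomial ℝ) (hLdeg : L.natDegree ≤ n)
    (hL : ∀ k ≤ n, Ffun n k ρ (fun x => L.eval x) = Ffun n k ρ f)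
    (Φ : Polynomial ℝ)
    (hΦ : ∀ j ≤ n, Φ.eval ((j : ℝ) / (n : ℝ)) = Ffun n j ρ f) :
    L.coeff n =
      ((ascPochhammer ℝ n).eval ((n : ℝ) * ρ) / ((n : ℝ) * ρ) ^ n) *
        ∑ i ∈ Finset.range (n + 1),
          Φ.eval ((i : ℝ) / (n : ℝ)) /
            ∏ j ∈ (Finset.range (n + 1)).erase i, ((i : ℝ) / (n : ℝ) - (j : ℝ) / (n : ℝ)) := by
  set s := (n : ℝ) * ρ
  have hn0 : (n : ℝ) ≠ 0 := Nat.cast_ne_zero.2 (Nat.one_le_iff_ne_zero.1 hn)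
  have hs : 0 < s := by positivity
  have hΦ_eq (i : ℕ) (hi : i ∈ Finset.range (n + 1)) :
      Φ.eval ((i : ℝ) / n) = (ascPochhammerTransform s L).eval ((i : ℝ) / n) := by
    have hin := Nat.lt_succ_iff.1 (Finset.mem_range.1 hi)
    have hnode : s * (i / n) = i * ρ := by simp only [s]; field_simp
    rw [hΦ i hin, ← hL i hin, Ffun_eval_polynomial hin hρ (Nat.lt_succ_of_le hLdeg),
      eval_ascPochhammerTransform s (Nat.lt_succ_of_le hLdeg), hnode]
  have hnodes : InjOn (fun i : ℕ ↦ (i : ℝ) / n) (Finset.range (n + 1)) := fun i _ j _ hij ↦ by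
    simpa [hn0] using hij
  rw [Finset.sum_congr rfl fun i hi ↦ by rw [hΦ_eq i hi], ← coeff_eq_sum_div_prod_range hnodes
    ((natDegree_ascPochhammerTransform_le s L).trans hLdeg), coeff_ascPochhammerTransform hLdeg]
  have := (ascPochhammer_pos n s hs).ne'
  field_simp

/-- `[F_{n,0}^ρ,…,F_{n,n}^ρ; f] = ((nρ)^{rising n}/(nρ)^n) · [0, 1/n, …, 1; Φ_n]`,
where `Φ_n ∈ Π_n` satisfies `Φ_n(j/n) = F_{n,j}^ρ(f)` and the classical divided
difference is `[x₀,…,x_n; g] = ∑ᵢ g(xᵢ)/∏_{j≠i}(xᵢ−x_j)`. -/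
theorem coeff_L_eq_risingFactorial_mul_dividedDifference
    (n : ℕ) (hn : 1 ≤ n) (ρ : ℝ) (hρ : 0 < ρ)
    (f : ℝ → ℝ) (hf : ContinuousOn f (Set.Icc 0 1))
    (L : Polynomial ℝ) (hLdeg : L.natDegree ≤ n)
    (hL : ∀ k ≤ n, Ffun n k ρ (fun x => L.eval x) = Ffun n k ρ f)
    (Φ : Polynomial ℝ) (hΦdeg : Φ.natDegree ≤ n)
    (hΦ : ∀ j ≤ n, Φ.eval ((j : ℝ) / (n : ℝ)) = Ffun n j ρ f) :
    L.coeff n =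
      ((ascPochhammer ℝ n).eval ((n : ℝ) * ρ) / ((n : ℝ) * ρ) ^ n) *
        ∑ i ∈ Finset.range (n + 1),
          Φ.eval ((i : ℝ) / (n : ℝ)) /
            ∏ j ∈ (Finset.range (n + 1)).erase i, ((i : ℝ) / (n : ℝ) - (j : ℝ) / (n : ℝ)) :=
  coeff_L_eq_risingFactorial_mul_dividedDifference_general n hn ρ hρ f L hLdeg hL Φ hΦ
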